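/- Let T be a Markov operator on L¹([0,1], λ). Then σ_T contains every Borel subset of [0,1] if and only if T is a composition operator induced by a measure-preserving function, i.e. there exists a measure-preserving Borel function g : [0,1] → [0,1] such that Tψ = ψ ∘ g λ-a.e. for every ψ ∈ L¹([0,1], λ). (In copula language: σ_C = ℬ if and only if C is left invertible.) -/

import Mathlib

open MeasureTheory Set unitInterval

noncomputable section

open Classical in
/-- The indicator function `𝟙_S` of a set `S ⊆ [0,1]`, as an element of `L¹([0,1], λ)`
(where `λ` is Lebesgue measure on the unit interval `I = [0,1]`).
If `S` is not measurable we default to `0`. -/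
def ind (S : Set I) : Lp ℝ 1 (volume : Measure I) :=
  if hS : MeasurableSet S then indicatorConstLp 1 hS (measure_ne_top _ _) (1:ℝ) else 0

/-- A Markov operator on `L¹([0,1], λ)`: a bounded linear operator `T` with
(i) `T𝟙 = 𝟙`, (ii) `∫ Tψ = ∫ ψ` for all `ψ ∈ L¹`, (iii) `Tψ ≥ 0` a.e. whenever `ψ ≥ 0` a.e. -/
structure IsMarkovOperator
    (T : Lp ℝ 1 (volume : Measure I) →L[ℝ] Lp ℝ 1 (volume : Measure I)) : Prop where
  map_one : T (ind univ) = ind univ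
  integral_map : ∀ ψ : Lp ℝ 1 (volume : Measure I), ∫ x, (T ψ) x = ∫ x, ψ x
  positive : ∀ ψ : Lp ℝ 1 (volume : Measure I), 0 ≤ᵐ[volume] ⇑ψ → 0 ≤ᵐ[volume] ⇑(T ψ)

/-- `σ_T`: the collection of Borel sets `S ⊆ [0,1]` with `T𝟙_S = 𝟙_R` (λ-a.e.) for some Borel
`R ⊆ [0,1]`.  (Equality in `L¹` is exactly λ-a.e. equality.) -/
def sigmaT (T : Lp ℝ 1 (volume : Measure I) →L[ℝ] Lp ℝ 1 (volume : Measure I)) :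
    Set (Set I) :=
  {S | MeasurableSet S ∧ ∃ R : Set I, MeasurableSet R ∧ T (ind S) = ind R}

/-- `σ*_T`: the collection of Borel sets `R ⊆ [0,1]` with `T𝟙_S = 𝟙_R` (λ-a.e.) for some Borel
`S ⊆ [0,1]`. -/
def sigmaTstar (T : Lp ℝ 1 (volume : Measure I) →L[ℝ] Lp ℝ 1 (volume : Measure I)) :
    Set (Set I) :=
  {R | MeasurableSet R ∧ ∃ S : Set I, MeasurableSet S ∧ T (ind S) = ind R}

section Auxiliary

open Filter

lemma ind_def {S : Set I} (hS : MeasurableSet S) :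
    ind S = indicatorConstLp 1 hS (measure_ne_top _ _) (1:ℝ) := by
  simp [ind, hS]


lemma ind_coeFn {S : Set I} (hS : MeasurableSet S) :
    ⇑(ind S) =ᵐ[volume] S.indicator (fun _ => (1:ℝ)) := by
  rw [ind_def hS]; exact indicatorConstLp_coeFn


lemma volume_Iic_I (t : I) : (volume : Measure I) (Iic t) = ENNReal.ofReal t := by
  have h := MeasurableEmbedding.subtype_coe (measurableSet_Icc (a:=(0:ℝ)) (b:=1))
  rw [show (volume : Measure I) = Measure.comap Subtype.val volume from rfl,
    h.comap_apply]
  have : (Subtype.val '' Iic t : Set ℝ) = Icc 0 t.1 := by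
    ext x
    simp only [mem_image, mem_Iic, mem_Icc]
    constructor
    · rintro ⟨y, hy, rfl⟩; exact ⟨y.2.1, hy⟩
    · rintro ⟨h0, h1⟩; exact ⟨⟨x, h0, h1.trans t.2.2⟩, h1, rfl⟩
  rw [this, Real.volume_Icc, sub_zero]


lemma ind_congr {S S' : Set I} (hS : MeasurableSet S) (hS' : MeasurableSet S')
    (h : S =ᵐ[volume] S') : ind S = ind S' := by
  refine Lp.ext ?_
  refine (ind_coeFn hS).trans (.trans ?_ (ind_coeFn hS').symm)
  exact indicator_ae_eq_of_ae_eq_set h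


lemma integral_ind {S : Set I} (hS : MeasurableSet S) :
    ∫ x, (ind S) x = ((volume : Measure I) S).toReal := by
  rw [ind_def hS, integral_indicatorConstLp, smul_eq_mul, mul_one]
  rfl

variable {T : Lp ℝ 1 (volume : Measure I) →L[ℝ] Lp ℝ 1 (volume : Measure I)}

lemma vol_eq (hT : IsMarkovOperator T) {S R : Set I} (hS : MeasurableSet S)
    (hR : MeasurableSet R) (h : T (ind S) = ind R) :
    (volume : Measure I) R = volume S := by
  have h1 : ((volume : Measure I) R).toReal = ((volume : Measure I) S).toReal := by
    rw [← integral_ind hR, ← integral_ind hS, ← h, hT.integral_map]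
  exact (ENNReal.toReal_eq_toReal_iff' (measure_ne_top _ _) (measure_ne_top _ _)).mp h1


lemma mono_ae (hT : IsMarkovOperator T) {S S' R R' : Set I} (hS : MeasurableSet S)
    (hS' : MeasurableSet S') (hR : MeasurableSet R) (hR' : MeasurableSet R')
    (hsub : S ⊆ S') (h : T (ind S) = ind R) (h' : T (ind S') = ind R') :
    ∀ᵐ y ∂(volume : Measure I), y ∈ R → y ∈ R' := by
  have hpos : 0 ≤ᵐ[volume] ⇑(ind S' - ind S) := by
    filter_upwards [Lp.coeFn_sub (ind S') (ind S), ind_coeFn hS, ind_coeFn hS'] with y h1 h2 h3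
    simp only [Pi.zero_apply]
    rw [h1, Pi.sub_apply, h2, h3]
    by_cases hy : y ∈ S
    · simp [hy, hsub hy]
    · simp [hy, indicator_nonneg]
  have := hT.positive _ hpos
  rw [map_sub, h, h'] at this
  filter_upwards [this, Lp.coeFn_sub (ind R') (ind R), ind_coeFn hR, ind_coeFn hR'] with
    y h1 h2 h3 h4 hy
  simp only [Pi.zero_apply] at h1
  rw [h2, Pi.sub_apply, h3, h4] at h1
  by_contra hy'
  simp [hy, hy'] at h1
  linarith


lemma ind_compl {S : Set I} (hS : MeasurableSet S) : ind Sᶜ = ind univ - ind S := by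
  refine Lp.ext ?_
  filter_upwards [ind_coeFn hS.compl, Lp.coeFn_sub (ind univ) (ind S), ind_coeFn hS,
    ind_coeFn MeasurableSet.univ] with y h1 h2 h3 h4
  rw [h1, h2, Pi.sub_apply, h3, h4]
  by_cases hy : y ∈ S <;> simp [hy]


lemma ind_union {A B : Set I} (hA : MeasurableSet A) (hB : MeasurableSet B)
    (hd : Disjoint A B) : ind (A ∪ B) = ind A + ind B := by
  refine Lp.ext ?_
  filter_upwards [ind_coeFn (hA.union hB), Lp.coeFn_add (ind A) (ind B), ind_coeFn hA,
    ind_coeFn hB] with y h1 h2 h3 h4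
  rw [h1, h2, Pi.add_apply, h3, h4]
  by_cases hy : y ∈ A
  · have : y ∉ B := fun hyB => hd.ne_of_mem hy hyB rfl
    simp [hy, this]
  · by_cases hy' : y ∈ B <;> simp [hy, hy']


lemma ind_diff {A B : Set I} (hA : MeasurableSet A) (hB : MeasurableSet B)
    (hsub : B ⊆ A) : ind (A \ B) = ind A - ind B := by
  refine Lp.ext ?_
  filter_upwards [ind_coeFn (hA.diff hB), Lp.coeFn_sub (ind A) (ind B), ind_coeFn hA,
    ind_coeFn hB] with y h1 h2 h3 h4
  rw [h1, h2, Pi.sub_apply, h3, h4]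
  by_cases hy : y ∈ B
  · simp [hy, hsub hy]
  · by_cases hy' : y ∈ A <;> simp [hy, hy']


lemma ind_tendsto {s : ℕ → Set I} (hs : ∀ n, MeasurableSet (s n)) (hmono : Monotone s) :
    Tendsto (fun n => ind (s n)) atTop (nhds (ind (⋃ n, s n))) := by
  have hU : MeasurableSet (⋃ n, s n) := MeasurableSet.iUnion hs
  rw [tendsto_iff_norm_sub_tendsto_zero]
  have hnorm : ∀ n, ‖ind (s n) - ind (⋃ n, s n)‖
      = ((volume : Measure I) ((⋃ n, s n) \ s n)).toReal := by
    intro n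
    rw [← norm_neg, neg_sub, ← ind_diff hU (hs n) (subset_iUnion s n), ind_def (hU.diff (hs n)),
      norm_indicatorConstLp one_ne_zero ENNReal.one_ne_top]
    simp
    rfl
  simp only [hnorm]
  have h0 : Tendsto (fun n => (volume : Measure I) ((⋃ n, s n) \ s n)) atTop (nhds 0) := by
    have hanti : Antitone (fun n => (⋃ n, s n) \ s n) :=
      fun m n hmn => diff_subset_diff_right (hmono hmn)
    have := MeasureTheory.tendsto_measure_iInter_atTop
      (μ := (volume : Measure I)) (s := fun n => (⋃ n, s n) \ s n)
      (fun n => ((hU.diff (hs n)).nullMeasurableSet)) hanti ⟨0, measure_ne_top _ _⟩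
    have hie : ⋂ n, ((⋃ n, s n) \ s n) = ∅ := by
      ext y; simp only [mem_iInter, mem_diff, mem_iUnion, mem_empty_iff_false, iff_false]
      intro h
      obtain ⟨n, hn⟩ := (h 0).1
      exact (h n).2 hn
    rwa [hie, measure_empty] at this
  exact (ENNReal.tendsto_toReal ENNReal.zero_ne_top).comp h0 |>.congr (fun n => rfl)

lemma construct (R : I → Set I) (hmeas : ∀ t, MeasurableSet (R t))
    (hvol : ∀ t, (volume : Measure I) (R t) = ENNReal.ofReal t)
    (hmono : ∀ s t : I, s ≤ t → ∀ᵐ y ∂(volume : Measure I), y ∈ R s → y ∈ R t) :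
    ∃ g : I → I, MeasurePreserving g volume volume ∧
      ∀ t, g ⁻¹' (Iic t) =ᵐ[(volume : Measure I)] R t := by
  classical
  -- the index type of rationals in [0,1]
  let ι := {q : ℚ // 0 ≤ q ∧ q ≤ 1}
  haveI : Nonempty ι := ⟨⟨0, le_refl 0, by norm_num⟩⟩
  let emb : ι → I := fun q => ⟨(q.1 : ℝ), by exact_mod_cast q.2.1, by exact_mod_cast q.2.2⟩
  let f : ι → I → ℝ := fun q y => if y ∈ R (emb q) then (q.1 : ℝ) else 1
  let h : I → ℝ := fun y => ⨅ q, f q y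
  have hbdd : ∀ y, BddBelow (range fun q => f q y) := by
    intro y
    refine ⟨0, ?_⟩
    rintro x ⟨q, rfl⟩
    simp only [f]
    split
    · exact_mod_cast q.2.1
    · norm_num
  have hf_le_one : ∀ (q : ι) y, f q y ≤ 1 := by
    intro q y
    simp only [f]
    split
    · exact_mod_cast q.2.2
    · exact le_refl 1
  have h0 : ∀ y, 0 ≤ h y := by
    intro y
    refine le_ciInf fun q => ?_
    simp only [f]
    split
    · exact_mod_cast q.2.1
    · norm_num
  have h1 : ∀ y, h y ≤ 1 := fun y =>
    (ciInf_le (hbdd y) (Classical.arbitrary ι)).trans (hf_le_one _ y)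
  let g : I → I := fun y => ⟨h y, h0 y, h1 y⟩
  have hgm : Measurable g := by
    refine Measurable.subtype_mk ?_
    exact Measurable.iInf fun q => Measurable.ite (hmeas _) measurable_const measurable_const
  have ha : ∀ (q : ι) (y : I), y ∈ R (emb q) → h y ≤ (q.1 : ℝ) := by
    intro q y hy
    exact (ciInf_le (hbdd y) q).trans_eq (if_pos hy)
  -- the good set where all rational inclusions hold
  have hE : ∀ᵐ y ∂(volume : Measure I),
      ∀ p q : ι, emb p ≤ emb q → (y ∈ R (emb p) → y ∈ R (emb q)) := by
    rw [ae_all_iff]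
    intro p
    rw [ae_all_iff]
    intro q
    by_cases hpq : emb p ≤ emb q
    · filter_upwards [hmono _ _ hpq] with y hy _
      exact hy
    · filter_upwards with y hy
      exact absurd hy hpq
  have hb : ∀ y : I, (∀ p q : ι, emb p ≤ emb q → (y ∈ R (emb p) → y ∈ R (emb q))) →
      ∀ q : ι, h y < (q.1 : ℝ) → y ∈ R (emb q) := by
    intro y hy q hlt
    obtain ⟨p, hp⟩ := exists_lt_of_ciInf_lt hlt
    by_cases hmem : y ∈ R (emb p)
    · simp only [f, if_pos hmem] at hp
      refine hy p q ?_ hmem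
      have : (p.1 : ℝ) ≤ (q.1 : ℝ) := le_of_lt hp
      exact this
    · simp only [f, if_neg hmem] at hp
      exact absurd hp (not_lt.mpr (by exact_mod_cast q.2.2))
  -- key intersection set
  set K : I → Set I := fun t => ⋂ (q : ι) (_ : t < emb q), R (emb q) with hK
  have hKmeas : ∀ t, MeasurableSet (K t) :=
    fun t => MeasurableSet.iInter fun q => MeasurableSet.iInter fun _ => hmeas _
  -- claim 1 : a.e., y ∈ R t → h y ≤ t
  have claim1 : ∀ t : I, ∀ᵐ y ∂(volume : Measure I), y ∈ R t → h y ≤ (t : ℝ) := by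
    intro t
    have hE1 : ∀ᵐ y ∂(volume : Measure I),
        ∀ q : ι, t ≤ emb q → (y ∈ R t → y ∈ R (emb q)) := by
      rw [ae_all_iff]
      intro q
      by_cases htq : t ≤ emb q
      · filter_upwards [hmono _ _ htq] with y hy _
        exact hy
      · filter_upwards with y hy
        exact absurd hy htq
    filter_upwards [hE1] with y hy hmem
    by_contra hgt
    push_neg at hgt
    obtain ⟨q, hq1, hq2⟩ := exists_rat_btwn hgt
    have hq0 : (0:ℚ) ≤ q := by exact_mod_cast (t.2.1.trans hq1.le)
    have hq1' : q ≤ 1 := by exact_mod_cast (hq2.le.trans (h1 y))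
    have hle : t ≤ emb ⟨q, hq0, hq1'⟩ := hq1.le
    have := ha ⟨q, hq0, hq1'⟩ y (hy _ hle hmem)
    exact absurd (this.trans_lt hq2) (lt_irrefl _)
  -- claim 2 : a.e., h y ≤ t → y ∈ K t
  have claim2 : ∀ t : I, ∀ᵐ y ∂(volume : Measure I), h y ≤ (t : ℝ) → y ∈ K t := by
    intro t
    filter_upwards [hE] with y hy hle
    simp only [hK, mem_iInter]
    intro q hq
    exact hb y hy q (lt_of_le_of_lt hle hq)
  -- claim 3 : a.e., y ∈ R t → y ∈ K t
  have claim3 : ∀ t : I, ∀ᵐ y ∂(volume : Measure I), y ∈ R t → y ∈ K t := by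
    intro t
    have hE1 : ∀ᵐ y ∂(volume : Measure I),
        ∀ q : ι, t ≤ emb q → (y ∈ R t → y ∈ R (emb q)) := by
      rw [ae_all_iff]
      intro q
      by_cases htq : t ≤ emb q
      · filter_upwards [hmono _ _ htq] with y hy _
        exact hy
      · filter_upwards with y hy
        exact absurd hy htq
    filter_upwards [hE1] with y hy hmem
    simp only [hK, mem_iInter]
    intro q hq
    exact hy q hq.le hmem
  -- measure of K t
  have hKvol : ∀ t : I, (volume : Measure I) (K t) = ENNReal.ofReal t := by
    intro t
    refine le_antisymm ?_ ?_
    · by_cases ht : (t : ℝ) < 1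
      · have hseq : ∀ n : ℕ, ∃ q : ℚ, (t : ℝ) < q ∧ (q : ℝ) < min 1 ((t:ℝ) + 1/(n+1)) := by
          intro n
          refine exists_rat_btwn (lt_min ht ?_)
          have : (0:ℝ) < 1/(n+1) := by positivity
          linarith
        choose q hq1 hq2 using hseq
        have hqI : ∀ n, (0:ℚ) ≤ q n ∧ q n ≤ 1 := by
          intro n
          constructor
          · exact_mod_cast (t.2.1.trans (hq1 n).le)
          · exact_mod_cast ((hq2 n).le.trans (min_le_left _ _))
        have hKle : ∀ n, (volume : Measure I) (K t) ≤ ENNReal.ofReal (q n : ℝ) := by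
          intro n
          refine (measure_mono ?_).trans_eq (hvol (emb ⟨q n, hqI n⟩))
          refine iInter_subset_of_subset ⟨q n, hqI n⟩ ?_
          exact iInter_subset _ (hq1 n)
        have htq : Tendsto (fun n : ℕ => ((q n : ℝ))) atTop (nhds (t : ℝ)) := by
          have hub : Tendsto (fun n : ℕ => (t:ℝ) + 1/(n+1)) atTop (nhds (t:ℝ)) := by
            have := tendsto_one_div_add_atTop_nhds_zero_nat (𝕜 := ℝ)
            have h2 := (tendsto_const_nhds (x := (t:ℝ)) (f := atTop)).add this
            simpa using h2
          exact tendsto_of_tendsto_of_tendsto_of_le_of_le tendsto_const_nhds hub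
            (fun n => (hq1 n).le) (fun n => ((hq2 n).trans_le (min_le_right _ _)).le)
        have htend : Tendsto (fun n => ENNReal.ofReal (q n : ℝ)) atTop
            (nhds (ENNReal.ofReal (t : ℝ))) :=
          (ENNReal.continuous_ofReal.tendsto _).comp htq
        exact ge_of_tendsto' htend hKle |>.trans (le_refl _) |> fun h => h
      · have ht1 : (t : ℝ) = 1 := le_antisymm t.2.2 (not_lt.mp ht)
        rw [ht1]
        simp only [ENNReal.ofReal_one]
        exact prob_le_one
    · calc ENNReal.ofReal (t:ℝ) = (volume : Measure I) (R t) := (hvol t).symm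
        _ ≤ (volume : Measure I) (K t) := measure_mono_ae (claim3 t)
  -- the level sets of h
  have hhm : Measurable h := Measurable.iInf fun q =>
    Measurable.ite (hmeas _) measurable_const measurable_const
  have hlev : ∀ t : I, MeasurableSet {y : I | h y ≤ (t:ℝ)} :=
    fun t => hhm measurableSet_Iic
  have hlevvol : ∀ t : I, (volume : Measure I) {y : I | h y ≤ (t:ℝ)} = ENNReal.ofReal t := by
    intro t
    refine le_antisymm ?_ ?_
    · calc (volume : Measure I) {y : I | h y ≤ (t:ℝ)} ≤ (volume : Measure I) (K t) :=
          measure_mono_ae (claim2 t)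
        _ = ENNReal.ofReal t := hKvol t
    · calc ENNReal.ofReal (t:ℝ) = (volume : Measure I) (R t) := (hvol t).symm
        _ ≤ (volume : Measure I) {y : I | h y ≤ (t:ℝ)} := measure_mono_ae (claim1 t)
  -- a.e. equality
  have heq : ∀ t : I, {y : I | h y ≤ (t:ℝ)} =ᵐ[(volume : Measure I)] R t := by
    intro t
    have e1 : {y : I | h y ≤ (t:ℝ)} =ᵐ[(volume : Measure I)] K t :=
      ae_eq_of_ae_subset_of_measure_ge (claim2 t) (by rw [hKvol t, hlevvol t]) (hlev t).nullMeasurableSet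
        (measure_ne_top _ _)
    have e2 : R t =ᵐ[(volume : Measure I)] K t :=
      ae_eq_of_ae_subset_of_measure_ge (claim3 t) (by rw [hKvol t, hvol t]) (hmeas t).nullMeasurableSet
        (measure_ne_top _ _)
    exact e1.trans e2.symm
  have hpre : ∀ t : I, g ⁻¹' (Iic t) = {y : I | h y ≤ (t:ℝ)} := by
    intro t
    ext y
    simp only [mem_preimage, mem_Iic, mem_setOf_eq, g]
    exact Iff.rfl
  refine ⟨g, ⟨hgm, ?_⟩, fun t => (hpre t) ▸ heq t⟩
  haveI : IsProbabilityMeasure (Measure.map g (volume : Measure I)) :=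
    Measure.isProbabilityMeasure_map hgm.aemeasurable
  refine Measure.ext_of_Iic (Measure.map g volume) volume fun t => ?_
  rw [Measure.map_apply hgm measurableSet_Iic, hpre t, hlevvol t, volume_Iic_I t]

lemma comp_smul {g : I → I} (hg : MeasurePreserving g (volume : Measure I) volume)
    (c : ℝ) (ψ : Lp ℝ 1 (volume : Measure I)) :
    Lp.compMeasurePreserving g hg (c • ψ) = c • Lp.compMeasurePreserving g hg ψ := by
  refine Lp.ext ?_
  filter_upwards [Lp.coeFn_compMeasurePreserving (c • ψ) hg,
    hg.quasiMeasurePreserving.ae_eq_comp (Lp.coeFn_smul c ψ),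
    Lp.coeFn_smul c (Lp.compMeasurePreserving g hg ψ),
    Lp.coeFn_compMeasurePreserving ψ hg] with y e1 e2 e3 e5
  rw [e1, e3]
  have h2 : ((⇑(c • ψ)) ∘ g) y = ((c • ⇑ψ) ∘ g) y := e2
  rw [h2]
  simp only [Function.comp_apply, Pi.smul_apply, smul_eq_mul]
  rw [e5]
  simp [Function.comp_apply]

end Auxiliary

/-- Let `T` be a Markov operator on `L¹([0,1], λ)`.  Then `σ_T` contains every
Borel subset of `[0,1]` if and only if `T` is the composition operator induced by a
measure-preserving (Borel) function `g : [0,1] → [0,1]`, i.e. `Tψ = ψ ∘ g` λ-a.e. for every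
`ψ ∈ L¹([0,1], λ)`. -/
theorem stmt5
    (T : Lp ℝ 1 (volume : Measure I) →L[ℝ] Lp ℝ 1 (volume : Measure I))
    (hT : IsMarkovOperator T) :
    (∀ S : Set I, MeasurableSet S → S ∈ sigmaT T) ↔
    (∃ g : I → I, MeasurePreserving g volume volume ∧
      ∀ ψ : Lp ℝ 1 (volume : Measure I), ⇑(T ψ) =ᵐ[volume] (⇑ψ) ∘ g) := by
  constructor
  · intro hσ
    have hchoice : ∀ t : I, ∃ R : Set I, MeasurableSet R ∧ T (ind (Iic t)) = ind R :=
      fun t => (hσ (Iic t) measurableSet_Iic).2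
    choose Rt hRtm hRt using hchoice
    have hvol : ∀ t : I, (volume : Measure I) (Rt t) = ENNReal.ofReal t := by
      intro t
      rw [vol_eq hT measurableSet_Iic (hRtm t) (hRt t), volume_Iic_I t]
    have hmono : ∀ s t : I, s ≤ t → ∀ᵐ y ∂(volume : Measure I), y ∈ Rt s → y ∈ Rt t :=
      fun s t hst => mono_ae hT measurableSet_Iic measurableSet_Iic (hRtm s) (hRtm t)
        (Iic_subset_Iic.mpr hst) (hRt s) (hRt t)
    obtain ⟨g, hg, hgt⟩ := construct Rt hRtm hvol hmono
    refine ⟨g, hg, ?_⟩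
    set Tg := Lp.compMeasurePreserving (E := ℝ) (p := 1) g hg with hTgdef
    have hTg_ind : ∀ (S : Set I) (hS : MeasurableSet S), Tg (ind S) = ind (g ⁻¹' S) := by
      intro S hS
      rw [ind_def hS, hTgdef, Lp.indicatorConstLp_compMeasurePreserving,
        ind_def (hS.preimage hg.measurable)]
    have hTg_univ : Tg (ind univ) = ind univ := by
      rw [hTg_ind univ MeasurableSet.univ, preimage_univ]
    have hagree : ∀ S : Set I, MeasurableSet S → T (ind S) = Tg (ind S) := by
      have hgen : (inferInstance : MeasurableSpace I)
          = MeasurableSpace.generateFrom (range Iic) :=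
        BorelSpace.measurable_eq.trans (borel_eq_generateFrom_Iic I)
      intro S hS
      refine MeasurableSpace.induction_on_inter
        (C := fun S _ => T (ind S) = Tg (ind S)) hgen isPiSystem_Iic ?_ ?_ ?_ ?_ S hS
      · show T (ind (∅ : Set I)) = Tg (ind ∅)
        have h0 : ind (∅ : Set I) = 0 := by
          rw [ind_def MeasurableSet.empty]
          exact indicatorConstLp_empty
        rw [h0, map_zero, map_zero]
      · rintro S ⟨t, rfl⟩
        rw [hRt t, hTg_ind (Iic t) measurableSet_Iic]
        exact ind_congr (hRtm t) (measurableSet_Iic.preimage hg.measurable) (hgt t).symm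
      · intro S hSm hC
        rw [ind_compl hSm, map_sub, map_sub, hT.map_one, hC, hTg_univ]
      · intro f hdisj hfm hC
        have haccm : ∀ n, MeasurableSet (accumulate f n) := fun n =>
          MeasurableSet.iUnion fun i => MeasurableSet.iUnion fun _ => hfm i
        have hCs : ∀ n, T (ind (accumulate f n)) = Tg (ind (accumulate f n)) := by
          intro n
          induction n with
          | zero =>
            have h0 : accumulate f 0 = f 0 := by
              simp [Set.accumulate_def, Nat.le_zero]
            rw [h0]; exact hC 0
          | succ n ih =>
            have hsucc : accumulate f (n+1) = accumulate f n ∪ f (n+1) := by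
              ext z
              simp only [Set.mem_accumulate, Set.mem_union]
              constructor
              · rintro ⟨y, hy, hz⟩
                rcases Nat.lt_or_ge y (n+1) with h' | h'
                · exact Or.inl ⟨y, Nat.lt_succ_iff.mp h', hz⟩
                · exact Or.inr (by rwa [le_antisymm hy h'] at hz)
              · rintro (⟨y, hy, hz⟩ | hz)
                · exact ⟨y, hy.trans (Nat.le_succ n), hz⟩
                · exact ⟨n+1, le_refl _, hz⟩
            have hdis : Disjoint (accumulate f n) (f (n+1)) := by
              rw [Set.disjoint_left]
              rintro z hz hz'
              obtain ⟨y, hy, hzy⟩ := Set.mem_accumulate.mp hz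
              exact (Set.disjoint_left.mp (hdisj (show y ≠ n+1 by omega))) hzy hz'
            rw [hsucc, ind_union (haccm n) (hfm (n+1)) hdis, map_add, map_add, ih, hC (n+1)]
        have ht1 := ind_tendsto haccm monotone_accumulate
        rw [Set.iUnion_accumulate] at ht1
        have hTlim := (T.continuous.tendsto _).comp ht1
        have hTglim := ((Lp.isometry_compMeasurePreserving hg).continuous.tendsto _).comp ht1
        refine tendsto_nhds_unique ?_ hTglim
        exact hTlim.congr fun n => hCs n
    have hmain : ∀ ψ : Lp ℝ 1 (volume : Measure I), T ψ = Tg ψ := by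
      refine Lp.induction (E := ℝ) (p := 1) (μ := (volume : Measure I)) ENNReal.one_ne_top
        (fun ψ => T ψ = Tg ψ) ?_ ?_ ?_
      · intro c S hS hμS
        rw [Lp.simpleFunc.coe_indicatorConst]
        have hcs : indicatorConstLp 1 hS hμS.ne c = c • ind S := by
          refine Lp.ext ?_
          filter_upwards [indicatorConstLp_coeFn (p := 1) (hs := hS) (hμs := hμS.ne) (c := c),
            Lp.coeFn_smul c (ind S), ind_coeFn hS] with y e1 e2 e3
          rw [e1, e2, Pi.smul_apply, e3]
          by_cases hy : y ∈ S <;> simp [hy]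
        rw [hcs, T.map_smul, hagree S hS, hTgdef]
        exact (comp_smul hg c (ind S)).symm
      · intro φ φ' hφ hφ' hd h1 h2
        rw [map_add, map_add, h1, h2]
      · exact isClosed_eq T.continuous (Lp.isometry_compMeasurePreserving hg).continuous
    intro ψ
    rw [hmain ψ]
    exact Lp.coeFn_compMeasurePreserving ψ hg
  · rintro ⟨g, hg, hcomp⟩ S hS
    refine ⟨hS, g ⁻¹' S, hS.preimage hg.measurable, Lp.ext ?_⟩
    have e2 := hg.quasiMeasurePreserving.ae_eq_comp (ind_coeFn hS)
    refine (hcomp (ind S)).trans (.trans e2 ?_)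
    refine .trans ?_ (ind_coeFn (hS.preimage hg.measurable)).symm
    refine Filter.Eventually.of_forall fun y => ?_
    exact (Set.indicator_comp_right g (s := S) (g := fun _ => (1:ℝ)) (x := y)).symm
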